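/- Let ⊙ be a non-degenerate pseudo-multiplication on [0,∞] and let φ denote the supremum of the set of ⊙-finite elements. If a σ-maxitive measure τ on a measurable space (E, 𝔅) has the Radon–Nikodym property with respect to the idempotent ⊙-integral, then τ(E) ≤ φ. -/

import Mathlib

open scoped ENNReal
open Set

/-- A pseudo-multiplication on `[0,∞]`: associative, monotone in each argument,
continuous on `(0,∞) × [0,∞]`, with `s ↦ s ⊙ t` continuous on `(0,∞]`,
admitting a left identity, without zero divisors, and with `0` as annihilator. -/
structure PseudoMul where
  op : ℝ≥0∞ → ℝ≥0∞ → ℝ≥0∞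
  assoc : ∀ a b c, op (op a b) c = op a (op b c)
  mono_left : ∀ t, Monotone fun s => op s t
  mono_right : ∀ s, Monotone fun t => op s t
  continuousOn : ContinuousOn (fun p : ℝ≥0∞ × ℝ≥0∞ => op p.1 p.2) (Ioo 0 ⊤ ×ˢ univ)
  continuousOn_left : ∀ t, ContinuousOn (fun s => op s t) (Ioi 0)
  one : ℝ≥0∞
  one_op : ∀ t, op one t = t
  no_zero_divisors : ∀ s t, op s t = 0 → s = 0 ∨ t = 0
  zero_op : ∀ t, op 0 t = 0
  op_zero : ∀ t, op t 0 = 0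

/-- An element `t` is `⊙`-finite if `⨅_{s>0} s ⊙ t = 0`. -/
def PseudoMul.OFinite (P : PseudoMul) (t : ℝ≥0∞) : Prop :=
  ⨅ s ∈ Ioi (0 : ℝ≥0∞), P.op s t = 0

/-- `⊙` is non-degenerate if its left identity is `⊙`-finite. -/
def PseudoMul.Nondegenerate (P : PseudoMul) : Prop :=
  P.OFinite P.one

/-- A σ-maxitive measure: vanishes on `∅` and turns countable unions of
measurable sets into suprema. -/
def SigmaMaxitive {E : Type*} [MeasurableSpace E] (ν : Set E → ℝ≥0∞) : Prop :=
  ν ∅ = 0 ∧ ∀ B : ℕ → Set E, (∀ n, MeasurableSet (B n)) →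
    ν (⋃ n, B n) = ⨆ n, ν (B n)

/-- The idempotent `⊙`-integral `∫_B f ⊙ dν = ⨆_{t ∈ [0,∞)} t ⊙ ν(B ∩ {f > t})`. -/
noncomputable def idemInt {E : Type*} [MeasurableSpace E] (P : PseudoMul) (ν : Set E → ℝ≥0∞)
    (f : E → ℝ≥0∞) (B : Set E) : ℝ≥0∞ :=
  ⨆ t ∈ Iio (⊤ : ℝ≥0∞), P.op t (ν (B ∩ {x | t < f x}))

/-- `ν ≪⊙ τ`: `ν(B) ≤ ∞ ⊙ τ(B)` whenever `τ(B)` is `⊙`-finite. -/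
def OAbsCont {E : Type*} [MeasurableSpace E] (P : PseudoMul)
    (ν τ : Set E → ℝ≥0∞) : Prop :=
  ∀ B : Set E, MeasurableSet B → P.OFinite (τ B) → ν B ≤ P.op ⊤ (τ B)

/-- `τ` is σ-`⊙`-finite. -/
def SigmaOFinite {E : Type*} [MeasurableSpace E] (P : PseudoMul)
    (τ : Set E → ℝ≥0∞) : Prop :=
  ∃ B : ℕ → Set E, (∀ n, MeasurableSet (B n)) ∧ (⋃ n, B n) = univ ∧
    ∀ n, P.OFinite (τ (B n))

/-- A σ-ideal of the σ-algebra: a nonempty collection of measurable sets closed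
under countable unions and under measurable subsets. -/
def IsSigmaIdeal {E : Type*} [MeasurableSpace E] (I : Set (Set E)) : Prop :=
  I.Nonempty ∧ (∀ A ∈ I, MeasurableSet A) ∧
    (∀ B : ℕ → Set E, (∀ n, B n ∈ I) → (⋃ n, B n) ∈ I) ∧
    (∀ A B : Set E, B ∈ I → A ⊆ B → MeasurableSet A → A ∈ I)

/-- `τ` is σ-principal. -/
def SigmaPrincipal {E : Type*} [MeasurableSpace E] (τ : Set E → ℝ≥0∞) : Prop :=
  ∀ I : Set (Set E), IsSigmaIdeal I → ∃ L ∈ I, ∀ S ∈ I, τ (S \ L) = 0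

/-- `τ` has the Radon–Nikodym property w.r.t. the idempotent `⊙`-integral. -/
def HasRNP {E : Type*} [MeasurableSpace E] (P : PseudoMul)
    (τ : Set E → ℝ≥0∞) : Prop :=
  ∀ ν : Set E → ℝ≥0∞, SigmaMaxitive ν → OAbsCont P ν τ →
    ∃ c : E → ℝ≥0∞, Measurable c ∧
      ∀ B : Set E, MeasurableSet B → ν B = idemInt P τ c B

/-!
Test the Radon–Nikodym property on the two-valued σ-maxitive measure `ν` that vanishes on the
sets with `τ ≤ φ` and equals `1⊙` elsewhere; `ν ≪⊙ τ` holds because `⊙`-finite values are `≤ φ`.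
If `c` is a density of `ν`, then `ν {c = 0} = 0`, so `τ {c = 0} ≤ φ`; and for `0 < t < ∞`,
`t ⊙ τ {c > t} ≤ ν {c > t} ≤ 1⊙` makes `τ {c > t}` `⊙`-finite (this is where non-degeneracy
enters). These sets cover `E`, so σ-maxitivity gives `τ E ≤ φ`.
-/

noncomputable def PseudoMul.phi (P : PseudoMul) : ℝ≥0∞ :=
  sSup {t | P.OFinite t}

namespace PseudoMul

variable {P : PseudoMul} {s t x y : ℝ≥0∞}

lemma one_ne_zero (P : PseudoMul) : P.one ≠ 0 := by
  intro h
  simpa [h, P.zero_op] using P.one_op 1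

lemma op_pos (hs : s ≠ 0) (ht : t ≠ 0) : 0 < P.op s t :=
  pos_iff_ne_zero.2 fun h => (P.no_zero_divisors s t h).elim hs ht

lemma OFinite.mono (hx : P.OFinite x) (hyx : y ≤ x) : P.OFinite y :=
  le_antisymm ((iInf₂_mono fun s _ => P.mono_right s hyx).trans hx.le) bot_le

lemma OFinite.of_op (ht : t ≠ 0) (h : P.OFinite (P.op t x)) : P.OFinite x := by
  refine le_antisymm ((le_iInf₂ fun s hs => ?_).trans h.le) bot_le
  rw [← P.assoc]
  exact biInf_le (fun u => P.op u x) (op_pos (mem_Ioi.1 hs).ne' ht)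

lemma OFinite.le_phi (h : P.OFinite t) : t ≤ P.phi :=
  le_sSup h

lemma le_phi_of_op_le_one (hP : P.Nondegenerate) (ht : t ≠ 0) (h : P.op t x ≤ P.one) :
    x ≤ P.phi :=
  ((hP.mono h).of_op ht).le_phi

end PseudoMul

section Maxitive

variable {E : Type*} [MeasurableSpace E] {ν τ : Set E → ℝ≥0∞}

lemma SigmaMaxitive.union (hν : SigmaMaxitive ν) {A B : Set E} (hA : MeasurableSet A)
    (hB : MeasurableSet B) : ν (A ∪ B) = max (ν A) (ν B) := by
  have hAB : A ∪ B = ⋃ n : ℕ, if n = 0 then A else B := by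
    ext x
    simp only [mem_union, mem_iUnion]
    constructor
    · rintro (h | h)
      exacts [⟨0, by simpa using h⟩, ⟨1, by simpa using h⟩]
    · rintro ⟨n, hn⟩
      split_ifs at hn <;> simp [hn]
  rw [hAB, hν.2 _ fun n => by split_ifs <;> assumption]
  refine le_antisymm (iSup_le fun n => ?_) (max_le (le_iSup_of_le 0 ?_) (le_iSup_of_le 1 ?_))
  · split_ifs
    exacts [le_max_left _ _, le_max_right _ _]
  · rw [if_pos rfl]
  · rw [if_neg one_ne_zero]

end Maxitive

section Threshold

variable {E : Type*} {τ : Set E → ℝ≥0∞} {a b : ℝ≥0∞}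

noncomputable def thresholdMeasure (τ : Set E → ℝ≥0∞) (a b : ℝ≥0∞) (B : Set E) : ℝ≥0∞ :=
  if τ B ≤ a then 0 else b

lemma thresholdMeasure_le (B : Set E) : thresholdMeasure τ a b B ≤ b := by
  unfold thresholdMeasure
  split_ifs <;> simp

lemma thresholdMeasure_eq_zero_iff (hb : b ≠ 0) {B : Set E} :
    thresholdMeasure τ a b B = 0 ↔ τ B ≤ a := by
  unfold thresholdMeasure
  split_ifs with h <;> simp [h, hb]

lemma SigmaMaxitive.thresholdMeasure [MeasurableSpace E] (hτ : SigmaMaxitive τ) (a b : ℝ≥0∞) :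
    SigmaMaxitive (thresholdMeasure τ a b) := by
  refine ⟨if_pos (hτ.1.trans_le bot_le), fun B hB => ?_⟩
  unfold _root_.thresholdMeasure
  rw [hτ.2 B hB]
  by_cases h : ∀ n, τ (B n) ≤ a
  · simp [iSup_le h, h]
  · obtain ⟨n, hn⟩ := not_forall.1 h
    rw [not_le] at hn
    rw [if_neg (hn.trans_le (le_iSup (fun m => τ (B m)) n)).not_ge]
    refine le_antisymm (le_iSup_of_le n ?_) (iSup_le fun m => ?_)
    · rw [if_neg hn.not_ge]
    · split_ifs <;> simp

lemma oAbsCont_thresholdMeasure_phi [MeasurableSpace E] (P : PseudoMul) (b : ℝ≥0∞) :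
    OAbsCont P (thresholdMeasure τ P.phi b) τ := fun _ _ hfin => by
  simp [thresholdMeasure, hfin.le_phi]

end Threshold

section Integral

variable {E : Type*} [MeasurableSpace E] (P : PseudoMul) {ν : Set E → ℝ≥0∞} {f : E → ℝ≥0∞}

lemma op_le_idemInt {t : ℝ≥0∞} (ht : t < ⊤) (B : Set E) :
    P.op t (ν (B ∩ {x | t < f x})) ≤ idemInt P ν f B :=
  le_biSup (fun t => P.op t (ν (B ∩ {x | t < f x}))) ht

lemma idemInt_setOf_eq_zero (hν : ν ∅ = 0) : idemInt P ν f {x | f x = 0} = 0 := by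
  refine le_antisymm (iSup₂_le fun t _ => ?_) bot_le
  have hempty : {x | f x = 0} ∩ {x | t < f x} = ∅ :=
    eq_empty_of_forall_notMem fun x ⟨hx0, hxt⟩ => (hxt.trans_eq hx0).not_ge bot_le
  rw [hempty, hν, P.op_zero]

end Integral

section Density

variable {E : Type*} [MeasurableSpace E] {P : PseudoMul} {ν τ : Set E → ℝ≥0∞} {c : E → ℝ≥0∞}

def IsIdemDensity (P : PseudoMul) (ν τ : Set E → ℝ≥0∞) (c : E → ℝ≥0∞) : Prop :=
  Measurable c ∧ ∀ B : Set E, MeasurableSet B → ν B = idemInt P τ c B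

lemma IsIdemDensity.apply_setOf_eq_zero (hc : IsIdemDensity P ν τ c) (hτ : τ ∅ = 0) :
    ν {x | c x = 0} = 0 := by
  rw [hc.2 _ (measurableSet_eq_fun hc.1 measurable_const), idemInt_setOf_eq_zero P hτ]

lemma IsIdemDensity.measure_setOf_lt_le_phi (hc : IsIdemDensity P ν τ c)
    (hP : P.Nondegenerate) (hν : ∀ B, ν B ≤ P.one) {t : ℝ≥0∞} (ht : t ≠ 0) (ht' : t < ⊤) :
    τ {x | t < c x} ≤ P.phi := by
  refine P.le_phi_of_op_le_one hP ht ?_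
  calc P.op t (τ {x | t < c x}) = P.op t (τ ({x | t < c x} ∩ {x | t < c x})) := by
        rw [inter_self]
    _ ≤ idemInt P τ c {x | t < c x} := op_le_idemInt P ht' _
    _ = ν {x | t < c x} := (hc.2 _ (measurableSet_lt measurable_const hc.1)).symm
    _ ≤ P.one := hν _

end Density

lemma setOf_eq_zero_union_iUnion_setOf_inv_lt {E : Type*} (c : E → ℝ≥0∞) :
    {x | c x = 0} ∪ ⋃ n : ℕ, {x | ((n : ℝ≥0∞) + 1)⁻¹ < c x} = univ := by
  refine eq_univ_of_forall fun x => ?_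
  rcases eq_or_ne (c x) 0 with h | h
  · exact Or.inl h
  · obtain ⟨n, hn⟩ := ENNReal.exists_inv_nat_lt h
    refine Or.inr (mem_iUnion.2 ⟨n, lt_of_le_of_lt ?_ hn⟩)
    gcongr
    exact le_self_add

/-- If `τ` has the Radon–Nikodym property, then `τ(E)` is at most the supremum
`φ` of the set of `⊙`-finite elements. -/
theorem measure_univ_le_phi_of_rnp {E : Type*} [MeasurableSpace E]
    (P : PseudoMul) (hP : P.Nondegenerate)
    (τ : Set E → ℝ≥0∞) (hτ : SigmaMaxitive τ) (hRNP : HasRNP P τ) :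
    τ univ ≤ sSup {t : ℝ≥0∞ | P.OFinite t} := by
  set ν := thresholdMeasure τ P.phi P.one
  obtain ⟨c, hc⟩ : ∃ c, IsIdemDensity P ν τ c :=
    hRNP ν (hτ.thresholdMeasure P.phi P.one) (oAbsCont_thresholdMeasure_phi P P.one)
  have hzero : τ {x | c x = 0} ≤ P.phi :=
    (thresholdMeasure_eq_zero_iff P.one_ne_zero).1 (hc.apply_setOf_eq_zero hτ.1)
  have hlevel (n : ℕ) : τ {x | ((n : ℝ≥0∞) + 1)⁻¹ < c x} ≤ P.phi :=
    hc.measure_setOf_lt_le_phi hP thresholdMeasure_le (by simp) (by simp)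
  have hmeas (n : ℕ) : MeasurableSet {x | ((n : ℝ≥0∞) + 1)⁻¹ < c x} :=
    measurableSet_lt measurable_const hc.1
  calc τ univ = max (τ {x | c x = 0}) (⨆ n : ℕ, τ {x | ((n : ℝ≥0∞) + 1)⁻¹ < c x}) := by
        rw [← setOf_eq_zero_union_iUnion_setOf_inv_lt c,
          hτ.union (measurableSet_eq_fun hc.1 measurable_const) (.iUnion hmeas), hτ.2 _ hmeas]
    _ ≤ P.phi := max_le hzero (iSup_le hlevel)
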